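/- Let z ≥ 1 be real, X a finite set of n points in a metric space, A a nonempty finite set of centers, R = (Σ_{p∈X} d(p,A)^z / (τn))^{1/z} with τ ≥ 1, and rings X_{i,j} defined by nearest center c_i ∈ A and annuli of radii 2^{j−1}R to 2^j R (ball of radius R for j = 0). Then Σ_{i,j} |X_{i,j}| · (2^j R)^z ≤ (1 + 2^z) · Σ_{p∈X} d(p,A)^z. -/

import Mathlib

/-! A point at distance `d` from its center lies in ring `j` only if `2^j R ≤ max (2d) R`, so
`(2^j R)^z ≤ 2^z d^z + R^z`. The rings are pairwise disjoint, hence summing over all rings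
gives at most `2^z Σ d(p,A)^z + n R^z`, and `n R^z ≤ Σ d(p,A)^z / τ`. -/

/-- The ring `X_{i,j}`: points of `X` whose nearest center (given by `c`) is `a`, at
distance in `(2^{j-1} R, 2^j R]` from `a` (distance `≤ R` for `j = 0`). -/
noncomputable def ringSet {Γ : Type*} [MetricSpace Γ] [DecidableEq Γ] (X : Finset Γ)
    (c : Γ → Γ) (R : ℝ) (a : Γ) (j : ℕ) : Finset Γ :=
  X.filter (fun p => c p = a ∧ dist p a ≤ 2 ^ j * R ∧ (j = 0 ∨ 2 ^ (j - 1) * R < dist p a))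

theorem rpow_two_pow_mul_le {R d z : ℝ} {j : ℕ} (hR : 0 ≤ R) (hd : 0 ≤ d) (hz : 0 ≤ z)
    (h : j = 0 ∨ 2 ^ (j - 1) * R < d) :
    ((2 : ℝ) ^ j * R) ^ z ≤ 2 ^ z * d ^ z + R ^ z := by
  have h2dz : 0 ≤ (2 : ℝ) ^ z * d ^ z := by positivity
  rcases j with _ | j
  · simpa using h2dz
  · have hlt : (2 : ℝ) ^ j * R < d := by simpa using h
    have hle : (2 : ℝ) ^ (j + 1) * R ≤ 2 * d := by
      rw [pow_succ]; linarith
    calc ((2 : ℝ) ^ (j + 1) * R) ^ z ≤ (2 * d) ^ z := Real.rpow_le_rpow (by positivity) hle hz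
      _ = 2 ^ z * d ^ z := Real.mul_rpow zero_le_two hd
      _ ≤ 2 ^ z * d ^ z + R ^ z := le_add_of_nonneg_right (by positivity)

section ringSet

variable {Γ : Type*} [MetricSpace Γ] [DecidableEq Γ] {X : Finset Γ} {c : Γ → Γ} {R : ℝ}

theorem mem_ringSet {a p : Γ} {j : ℕ} :
    p ∈ ringSet X c R a j ↔
      p ∈ X ∧ c p = a ∧ dist p a ≤ 2 ^ j * R ∧ (j = 0 ∨ 2 ^ (j - 1) * R < dist p a) :=
  Finset.mem_filter

theorem le_of_mem_ringSet_of_mem_ringSet (hR : 0 ≤ R) {a a' p : Γ} {j j' : ℕ}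
    (hp : p ∈ ringSet X c R a j) (hp' : p ∈ ringSet X c R a' j') : j ≤ j' := by
  obtain ⟨-, rfl, -, hj⟩ := mem_ringSet.1 hp
  obtain ⟨-, rfl, hj', -⟩ := mem_ringSet.1 hp'
  by_contra! hlt
  rcases hj with rfl | hj
  · omega
  · have : (2 : ℝ) ^ j' ≤ 2 ^ (j - 1) := pow_le_pow_right₀ one_le_two (by omega)
    nlinarith

theorem pairwiseDisjoint_ringSet (hR : 0 ≤ R) :
    (Set.univ : Set (Γ × ℕ)).PairwiseDisjoint (fun x => ringSet X c R x.1 x.2) := by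
  rintro ⟨a, j⟩ - ⟨a', j'⟩ - hne
  refine Finset.disjoint_left.2 fun p hp hp' => hne ?_
  have ha : a = a' := (mem_ringSet.1 hp).2.1.symm.trans (mem_ringSet.1 hp').2.1
  have hj : j = j' := le_antisymm (le_of_mem_ringSet_of_mem_ringSet hR hp hp')
    (le_of_mem_ringSet_of_mem_ringSet hR hp' hp)
  rw [ha, hj]

theorem sum_sum_ringSet_le (hR : 0 ≤ R) {f : Γ → ℝ} (hf : ∀ p ∈ X, 0 ≤ f p)
    (s : Finset (Γ × ℕ)) :
    ∑ x ∈ s, ∑ p ∈ ringSet X c R x.1 x.2, f p ≤ ∑ p ∈ X, f p := by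
  rw [← Finset.sum_biUnion ((pairwiseDisjoint_ringSet hR).subset (Set.subset_univ _))]
  refine Finset.sum_le_sum_of_subset_of_nonneg ?_ fun p hp _ => hf p hp
  intro p hp
  obtain ⟨x, -, hpx⟩ := Finset.mem_biUnion.1 hp
  exact (mem_ringSet.1 hpx).1

end ringSet

theorem stmt17_general {Γ : Type*} [MetricSpace Γ] [DecidableEq Γ] (z : ℝ) (hz : 1 ≤ z)
    (X A : Finset Γ) (τ : ℝ) (hτ : 1 ≤ τ)
    (c : Γ → Γ)
    (hc : ∀ p ∈ X, c p ∈ A ∧ dist p (c p) = Metric.infDist p (A : Set Γ)) (R : ℝ)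
    (hR : R = ((∑ p ∈ X, Metric.infDist p (A : Set Γ) ^ z) / (τ * X.card)) ^ (1 / z))
    (J : ℕ) :
    ∑ a ∈ A, ∑ j ∈ Finset.range J, ((ringSet X c R a j).card : ℝ) * (2 ^ j * R) ^ z ≤
      (1 + (2 : ℝ) ^ z) * ∑ p ∈ X, Metric.infDist p (A : Set Γ) ^ z := by
  set D : Γ → ℝ := fun p => Metric.infDist p (A : Set Γ)
  set S := ∑ p ∈ X, D p ^ z
  have hDz : ∀ p, 0 ≤ D p ^ z := fun p => Real.rpow_nonneg Metric.infDist_nonneg z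
  have hS : 0 ≤ S := Finset.sum_nonneg fun p _ => hDz p
  have hR0 : 0 ≤ R := hR ▸ Real.rpow_nonneg (div_nonneg hS (by positivity)) _
  have hnR : (X.card : ℝ) * R ^ z ≤ S := by
    rw [hR, one_div, Real.rpow_inv_rpow (by positivity) (by positivity)]
    rcases (Nat.zero_le X.card).eq_or_lt with hn | hn
    · simp [← hn, hS]
    · rw [mul_div_assoc', mul_comm τ, ← div_div, mul_div_cancel_left₀ _ (by positivity)]
      exact div_le_self hS hτ
  have hring : ∀ x : Γ × ℕ, ∀ p ∈ ringSet X c R x.1 x.2,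
      ((2 : ℝ) ^ x.2 * R) ^ z ≤ 2 ^ z * D p ^ z + R ^ z := by
    rintro ⟨a, j⟩ p hp
    obtain ⟨hpX, rfl, -, hj⟩ := mem_ringSet.1 hp
    rw [(hc p hpX).2] at hj
    exact rpow_two_pow_mul_le hR0 Metric.infDist_nonneg (by linarith) hj
  calc ∑ a ∈ A, ∑ j ∈ Finset.range J, ((ringSet X c R a j).card : ℝ) * (2 ^ j * R) ^ z
      = ∑ x ∈ A ×ˢ Finset.range J, ∑ _p ∈ ringSet X c R x.1 x.2, ((2 : ℝ) ^ x.2 * R) ^ z := by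
        simp only [Finset.sum_product, Finset.sum_const, nsmul_eq_mul]
    _ ≤ ∑ x ∈ A ×ˢ Finset.range J, ∑ p ∈ ringSet X c R x.1 x.2, (2 ^ z * D p ^ z + R ^ z) :=
        Finset.sum_le_sum fun x _ => Finset.sum_le_sum (hring x)
    _ ≤ ∑ p ∈ X, (2 ^ z * D p ^ z + R ^ z) :=
        sum_sum_ringSet_le hR0 (fun p _ => by have := hDz p; positivity) _
    _ = 2 ^ z * S + X.card * R ^ z := by
        rw [Finset.sum_add_distrib, ← Finset.mul_sum, Finset.sum_const, nsmul_eq_mul]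
    _ ≤ (1 + 2 ^ z) * S := by linarith

theorem stmt17 {Γ : Type*} [MetricSpace Γ] [DecidableEq Γ] (z : ℝ) (hz : 1 ≤ z)
    (X A : Finset Γ) (hX : X.Nonempty) (hA : A.Nonempty) (τ : ℝ) (hτ : 1 ≤ τ)
    (c : Γ → Γ)
    (hc : ∀ p ∈ X, c p ∈ A ∧ dist p (c p) = Metric.infDist p (A : Set Γ)) (R : ℝ)
    (hR : R = ((∑ p ∈ X, Metric.infDist p (A : Set Γ) ^ z) / (τ * X.card)) ^ (1 / z))
    (J : ℕ) :
    ∑ a ∈ A, ∑ j ∈ Finset.range J, ((ringSet X c R a j).card : ℝ) * (2 ^ j * R) ^ z ≤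
      (1 + (2 : ℝ) ^ z) * ∑ p ∈ X, Metric.infDist p (A : Set Γ) ^ z :=
  stmt17_general z hz X A τ hτ c hc R hR J
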